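/- Let T be a tree (or more generally a unicyclic graph) with maximum degree Δ ≥ 2 and let 0 ≤ α ≤ 1. Then the α-spectral radius satisfies ρ_α(T) ≤ αΔ + 2(1−α)√(Δ−1). -/

import Mathlib

/-!
Let `S` be a single vertex if `G` is a tree and the vertex set of a cycle otherwise, and let
`h v` be the distance from `v` to `S`. Double counting the edges against `|E| ≤ |V|` shows that a
vertex outside `S` has exactly one neighbour `u` with `h u ≤ h v`, and a vertex of `S` at most two.
With `t = √(Δ - 1)`, the positive vector `w v = t ^ (-h v)` therefore satisfies
`∑_{u ∼ v} w u ≤ 2 t w v`, so `A_α w ≤ (α Δ + 2 (1 - α) t) w` entrywise. For a nonnegative matrix,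
such a positive supervector bounds every real eigenvalue: compare an eigenvector `x` with `w`
where `|x| / w` is maximal.
-/

open Matrix Finset

namespace Matrix

variable {n : Type*} [Fintype n]

theorem abs_le_of_mulVec_eq_smul_of_mulVec_le {M : Matrix n n ℝ} (hM : ∀ i j, 0 ≤ M i j)
    {w : n → ℝ} (hw : ∀ i, 0 < w i) {c : ℝ} (hMw : ∀ i, (M *ᵥ w) i ≤ c * w i)
    {x : n → ℝ} (hx : x ≠ 0) {ρ : ℝ} (hρ : M *ᵥ x = ρ • x) : |ρ| ≤ c := by
  obtain ⟨i₀, hi₀⟩ := Function.ne_iff.mp hx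
  obtain ⟨i, -, hmax⟩ := exists_max_image univ (fun j => |x j| / w j) ⟨i₀, mem_univ _⟩
  set s := |x i| / w i
  have hs : 0 < s := (div_pos (abs_pos.mpr hi₀) (hw i₀)).trans_le (hmax i₀ (mem_univ _))
  have hxw : ∀ j, |x j| ≤ s * w j := fun j => (div_le_iff₀ (hw j)).mp (hmax j (mem_univ _))
  have hxi : |x i| = s * w i := (div_mul_cancel₀ _ (hw i).ne').symm
  refine le_of_mul_le_mul_right ?_ (mul_pos hs (hw i))
  calc |ρ| * (s * w i) = |(M *ᵥ x) i| := by
        rw [hρ, Pi.smul_apply, smul_eq_mul, abs_mul, hxi]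
    _ ≤ ∑ j, M i j * |x j| := by
        simp only [mulVec, dotProduct]
        refine (abs_sum_le_sum_abs _ _).trans_eq (sum_congr rfl fun j _ => ?_)
        rw [abs_mul, abs_of_nonneg (hM i j)]
    _ ≤ ∑ j, M i j * (s * w j) := sum_le_sum fun j _ => mul_le_mul_of_nonneg_left (hxw j) (hM i j)
    _ = s * (M *ᵥ w) i := by
        simp only [mulVec, dotProduct, mul_sum]
        exact sum_congr rfl fun j _ => by ring
    _ ≤ s * (c * w i) := mul_le_mul_of_nonneg_left (hMw i) hs.le
    _ = c * (s * w i) := by ring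

end Matrix

namespace SimpleGraph

section Levels

variable {V : Type*}

noncomputable def distToFinset (G : SimpleGraph V) (S : Finset V) (hS : S.Nonempty) (v : V) : ℕ :=
  S.inf' hS (G.dist v)

variable {G : SimpleGraph V} {S : Finset V} {hS : S.Nonempty}

theorem Connected.distToFinset_eq_zero_iff (hconn : G.Connected) {v : V} :
    G.distToFinset S hS v = 0 ↔ v ∈ S := by
  constructor
  · intro h0
    obtain ⟨s, hs, he⟩ := exists_mem_eq_inf' hS (G.dist v)
    rw [distToFinset, he] at h0
    rwa [hconn.dist_eq_zero_iff.mp h0]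
  · intro hv
    exact Nat.eq_zero_of_le_zero ((inf'_le _ hv).trans (dist_self).le)

theorem Connected.distToFinset_le_of_adj (hconn : G.Connected) {u v : V} (hadj : G.Adj u v) :
    G.distToFinset S hS v ≤ G.distToFinset S hS u + 1 := by
  obtain ⟨s, hs, he⟩ := exists_mem_eq_inf' hS (G.dist u)
  calc G.distToFinset S hS v ≤ G.dist v s := inf'_le _ hs
    _ ≤ G.dist v u + G.dist u s := hconn.dist_triangle
    _ = G.distToFinset S hS u + 1 := by
        rw [dist_eq_one_iff_adj.mpr hadj.symm, add_comm, distToFinset, he]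

theorem Connected.exists_adj_distToFinset_lt (hconn : G.Connected) {v : V} (hv : v ∉ S) :
    ∃ u, G.Adj v u ∧ G.distToFinset S hS u < G.distToFinset S hS v := by
  obtain ⟨s, hs, he⟩ := exists_mem_eq_inf' hS (G.dist v)
  obtain ⟨p, hp⟩ := hconn.exists_walk_length_eq_dist v s
  cases p with
  | nil => exact absurd hs hv
  | @cons _ u _ hadj q =>
    refine ⟨u, hadj, ?_⟩
    calc G.distToFinset S hS u ≤ G.dist u s := inf'_le _ hs
      _ ≤ q.length := dist_le q
      _ < G.distToFinset S hS v := by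
          rw [distToFinset, he, ← hp, Walk.length_cons]; omega

theorem zpow_neg_le_of_adj {t : ℝ} (ht : 1 ≤ t) {h : V → ℕ}
    (hlip : ∀ u v, G.Adj u v → h v ≤ h u + 1) {u v : V} (hadj : G.Adj v u) :
    t ^ (-(h u : ℤ))
      ≤ (if h u ≤ h v then (if h v = 0 then 1 else t) else t⁻¹) * t ^ (-(h v : ℤ)) := by
  have ht0 : 0 < t := by linarith
  have h1 := hlip _ _ hadj
  have h2 := hlip _ _ hadj.symm
  rw [show -(h u : ℤ) = ((h v : ℤ) - h u) + -(h v : ℤ) by ring, zpow_add₀ ht0.ne']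
  refine mul_le_mul_of_nonneg_right ?_ (zpow_pos ht0 _).le
  split_ifs with hle hv0
  · rw [show (h v : ℤ) - h u = 0 by omega, zpow_zero]
  · exact (zpow_le_zpow_right₀ ht (by omega : (h v : ℤ) - h u ≤ 1)).trans_eq (zpow_one t)
  · rw [show (h v : ℤ) - h u = -1 by omega, _root_.zpow_neg_one]

end Levels

variable {V : Type*} [Fintype V] {G : SimpleGraph V} [DecidableRel G.Adj]

section AlphaAdjMatrix

variable [DecidableEq V]

variable (G) in
def alphaAdjMatrix (α : ℝ) : Matrix V V ℝ :=
  α • diagonal (fun v => (G.degree v : ℝ)) + (1 - α) • G.adjMatrix ℝ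

theorem alphaAdjMatrix_nonneg {α : ℝ} (hα0 : 0 ≤ α) (hα1 : α ≤ 1) (u v : V) :
    0 ≤ G.alphaAdjMatrix α u v := by
  simp only [alphaAdjMatrix, Matrix.add_apply, Matrix.smul_apply, diagonal_apply, adjMatrix_apply,
    smul_eq_mul]
  exact add_nonneg (mul_nonneg hα0 (by split_ifs <;> positivity))
    (mul_nonneg (sub_nonneg.mpr hα1) (by split_ifs <;> norm_num))

theorem alphaAdjMatrix_mulVec_apply (α : ℝ) (w : V → ℝ) (v : V) :
    (G.alphaAdjMatrix α *ᵥ w) v = α * G.degree v * w v + (1 - α) * ∑ u ∈ G.neighborFinset v, w u := by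
  simp [alphaAdjMatrix, add_mulVec, smul_mulVec, mulVec_diagonal, adjMatrix_mulVec_apply, mul_assoc]

theorem le_of_alphaAdjMatrix_mulVec_eq_smul {α : ℝ} (hα0 : 0 ≤ α) (hα1 : α ≤ 1)
    {w : V → ℝ} (hw : ∀ v, 0 < w v) {r : ℝ} (hr : ∀ v, ∑ u ∈ G.neighborFinset v, w u ≤ r * w v)
    {x : V → ℝ} (hx : x ≠ 0) {ρ : ℝ} (hρ : G.alphaAdjMatrix α *ᵥ x = ρ • x) :
    ρ ≤ α * G.maxDegree + (1 - α) * r := by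
  refine (le_abs_self ρ).trans <| Matrix.abs_le_of_mulVec_eq_smul_of_mulVec_le
    (alphaAdjMatrix_nonneg hα0 hα1) hw (fun v => ?_) hx hρ
  have hdeg : (G.degree v : ℝ) ≤ G.maxDegree := by exact_mod_cast G.degree_le_maxDegree v
  have h1 := mul_le_mul_of_nonneg_left (hr v) (sub_nonneg.mpr hα1)
  have h2 := mul_le_mul_of_nonneg_right (mul_le_mul_of_nonneg_left hdeg hα0) (hw v).le
  rw [alphaAdjMatrix_mulVec_apply]
  linarith

end AlphaAdjMatrix

variable (G) in
def lowerNeighborFinset (h : V → ℕ) (v : V) : Finset V := {u ∈ G.neighborFinset v | h u ≤ h v}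

variable (G) in
def levelNeighborFinset (h : V → ℕ) (v : V) : Finset V := {u ∈ G.neighborFinset v | h u = h v}

variable (G) in
theorem sum_sum_neighborFinset_comm {M : Type*} [AddCommMonoid M] (f : V → V → M) :
    ∑ v, ∑ u ∈ G.neighborFinset v, f v u = ∑ v, ∑ u ∈ G.neighborFinset v, f u v := by
  simp only [neighborFinset_eq_filter, sum_filter]
  rw [sum_comm]
  exact sum_congr rfl fun v _ => sum_congr rfl fun u _ => if_congr (G.adj_comm u v) rfl rfl

theorem two_mul_sum_card_lowerNeighborFinset (h : V → ℕ) :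
    2 * ∑ v, #(G.lowerNeighborFinset h v)
      = 2 * #G.edgeFinset + ∑ v, #(G.levelNeighborFinset h v) := by
  simp only [lowerNeighborFinset, levelNeighborFinset, card_filter]
  rw [← sum_degrees_eq_twice_card_edges, two_mul]
  nth_rewrite 2 [sum_sum_neighborFinset_comm]
  simp only [← card_neighborFinset_eq_degree, card_eq_sum_ones, ← sum_add_distrib]
  refine sum_congr rfl fun v _ => sum_congr rfl fun u _ => ?_
  split_ifs <;> omega

theorem lowerNeighborFinset_eq_levelNeighborFinset {h : V → ℕ} {v : V} (hv : h v = 0) :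
    G.lowerNeighborFinset h v = G.levelNeighborFinset h v :=
  filter_congr fun u _ => by rw [hv, Nat.le_zero]

theorem card_levelNeighborFinset_lt {h : V → ℕ} {v u : V} (hadj : G.Adj v u) (hu : h u < h v) :
    #(G.levelNeighborFinset h v) < #(G.lowerNeighborFinset h v) := by
  refine card_lt_card ⟨fun w hw => ?_, fun hsub => ?_⟩
  · simp only [levelNeighborFinset, lowerNeighborFinset, mem_filter] at hw ⊢
    exact ⟨hw.1, hw.2.le⟩
  · have := hsub (mem_filter.mpr ⟨(mem_neighborFinset _ _ _).mpr hadj, hu.le⟩)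
    exact hu.ne (mem_filter.mp this).2

theorem card_lowerNeighborFinset_le {h : V → ℕ} {b : ℕ}
    (hdown : ∀ v, h v ≠ 0 → ∃ u, G.Adj v u ∧ h u < h v)
    (hzero : ∀ v, h v = 0 → b ≤ #(G.levelNeighborFinset h v))
    (hedges : 2 * #G.edgeFinset ≤ ∑ v, if h v = 0 then b else 2) (v : V) :
    #(G.lowerNeighborFinset h v) ≤ if h v = 0 then b else 1 := by
  have key : ∀ v, #(G.levelNeighborFinset h v) + (if h v = 0 then b else 2)
        ≤ 2 * #(G.lowerNeighborFinset h v) ∧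
      ((if h v = 0 then b else 1) < #(G.lowerNeighborFinset h v) →
        #(G.levelNeighborFinset h v) + (if h v = 0 then b else 2)
          < 2 * #(G.lowerNeighborFinset h v)) := by
    intro v
    by_cases hv : h v = 0
    · rw [if_pos hv, if_pos hv, lowerNeighborFinset_eq_levelNeighborFinset hv]
      have := hzero v hv
      omega
    · obtain ⟨u, hadj, hu⟩ := hdown v hv
      have := card_levelNeighborFinset_lt hadj hu
      rw [if_neg hv, if_neg hv]
      omega
  -- By `hedges`, `key` summed over `v` is bounded by `2 * ∑ #lower` itself, so it is nowhere strict.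
  by_contra! hv
  have hlt := sum_lt_sum (fun v _ => (key v).1) ⟨v, mem_univ v, (key v).2 hv⟩
  rw [← mul_sum, two_mul_sum_card_lowerNeighborFinset, sum_add_distrib] at hlt
  omega

theorem Walk.IsCycle.two_le_card_filter_mem_support [DecidableEq V] {u v : V} {c : G.Walk u u}
    (hc : c.IsCycle) (hv : v ∈ c.support) :
    2 ≤ #{w ∈ G.neighborFinset v | w ∈ c.support} := by
  rw [← hc.ncard_neighborSet_toSubgraph_eq_two hv, ← Set.ncard_coe_finset]
  refine Set.ncard_le_ncard (fun w hw => ?_) (Set.toFinite _)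
  have hadj : c.toSubgraph.Adj v w := hw
  simp only [coe_filter, mem_neighborFinset, Set.mem_ofPred_eq]
  exact ⟨hadj.adj_sub, c.mem_verts_toSubgraph.mp (c.toSubgraph.edge_vert hadj.symm)⟩

theorem Connected.exists_levels_of_core [DecidableEq V] (hconn : G.Connected) {S : Finset V}
    (hS : S.Nonempty) {b : ℕ} (hb : b ≤ 2) (hcore : ∀ v ∈ S, b ≤ #{u ∈ G.neighborFinset v | u ∈ S})
    (hedges : 2 * #G.edgeFinset ≤ b * #S + 2 * #Sᶜ) :
    ∃ h : V → ℕ, (∀ u v, G.Adj u v → h v ≤ h u + 1) ∧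
      ∀ v, #(G.lowerNeighborFinset h v) ≤ if h v = 0 then 2 else 1 := by
  have hzero (v : V) := hconn.distToFinset_eq_zero_iff (hS := hS) (v := v)
  refine ⟨G.distToFinset S hS, fun u v => hconn.distToFinset_le_of_adj, fun v => ?_⟩
  refine (card_lowerNeighborFinset_le (b := b)
    (fun v hv => hconn.exists_adj_distToFinset_lt (mt (hzero v).mpr hv)) (fun v hv => ?_) ?_ v).trans ?_
  · rw [levelNeighborFinset, hv]
    simpa only [hzero] using hcore v ((hzero v).mp hv)
  · simp_rw [hzero]
    refine hedges.trans_eq ?_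
    rw [sum_ite, sum_const, sum_const, compl_eq_univ_sdiff, sdiff_eq_filter]
    simp [mul_comm]
  · split_ifs <;> omega

theorem Connected.exists_levels_of_card_edgeFinset_le [DecidableEq V] (hconn : G.Connected)
    (hedges : #G.edgeFinset ≤ Fintype.card V) :
    ∃ h : V → ℕ, (∀ u v, G.Adj u v → h v ≤ h u + 1) ∧
      ∀ v, #(G.lowerNeighborFinset h v) ≤ if h v = 0 then 2 else 1 := by
  by_cases hacyc : G.IsAcyclic
  · obtain ⟨r⟩ := hconn.nonempty
    have htree := (IsTree.card_edgeFinset ⟨hconn, hacyc⟩)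
    refine hconn.exists_levels_of_core (singleton_nonempty r) (b := 0) (by norm_num) (by simp) ?_
    rw [card_compl, card_singleton]
    omega
  · obtain ⟨x, c, hc⟩ : ∃ x, ∃ c : G.Walk x x, c.IsCycle := by simpa [IsAcyclic] using hacyc
    refine hconn.exists_levels_of_core (S := c.support.toFinset) ⟨x, by simp⟩ le_rfl
      (fun v hv => ?_) ?_
    · simpa using hc.two_le_card_filter_mem_support (List.mem_toFinset.mp hv)
    · rw [← mul_add, card_add_card_compl]
      omega

theorem sum_neighborFinset_zpow_le {Δ : ℕ} {t : ℝ} (ht : 1 ≤ t) (htΔ : t ^ 2 = Δ - 1)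
    {h : V → ℕ} (hlip : ∀ u v, G.Adj u v → h v ≤ h u + 1) {v : V} (hdeg : G.degree v ≤ Δ)
    (hlower : #(G.lowerNeighborFinset h v) ≤ if h v = 0 then 2 else 1) :
    ∑ u ∈ G.neighborFinset v, t ^ (-(h u : ℤ)) ≤ 2 * t * t ^ (-(h v : ℤ)) := by
  have ht0 : 0 < t := by linarith
  have hterm (u : V) (hu : u ∈ G.neighborFinset v) :=
    zpow_neg_le_of_adj ht hlip ((mem_neighborFinset _ _ _).mp hu)
  refine (sum_le_sum hterm).trans ?_
  rw [← sum_mul, sum_ite, sum_const, sum_const, nsmul_eq_mul, nsmul_eq_mul]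
  refine mul_le_mul_of_nonneg_right ?_ (zpow_pos ht0 _).le
  have hcard := card_filter_add_card_filter_not (s := G.neighborFinset v) (fun u => h u ≤ h v)
  rw [card_neighborFinset_eq_degree] at hcard
  set a := #{u ∈ G.neighborFinset v | h u ≤ h v}
  set b := #{u ∈ G.neighborFinset v | ¬h u ≤ h v}
  have hab : (a : ℝ) + b ≤ t ^ 2 + 1 := by
    have : (a : ℝ) + b ≤ Δ := by exact_mod_cast (show a + b ≤ Δ by omega)
    linarith
  have hs : t * t⁻¹ = 1 := mul_inv_cancel₀ ht0.ne'
  have hs0 : 0 < t⁻¹ := inv_pos.mpr ht0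
  -- Since `a + b ≤ Δ = t ^ 2 + 1`: `a * t + b / t ≤ 2 * t` if `a ≤ 1`, and `a + b / t ≤ 2 * t` if `a ≤ 2`.
  change a ≤ _ at hlower
  split_ifs at hlower ⊢
  · have : (a : ℝ) ≤ 2 := by exact_mod_cast hlower
    nlinarith [sq_nonneg (t - 1), mul_le_mul_of_nonneg_right hab hs0.le]
  · have : (a : ℝ) ≤ 1 := by exact_mod_cast hlower
    nlinarith [sq_nonneg (t - 1), mul_le_mul_of_nonneg_right hab hs0.le]

end SimpleGraph

open SimpleGraph

theorem stmt_15 {V : Type*} [Fintype V] [DecidableEq V] (G : SimpleGraph V)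
    [DecidableRel G.Adj] (hconn : G.Connected)
    (hsize : G.edgeFinset.card = Fintype.card V - 1 ∨ G.edgeFinset.card = Fintype.card V)
    (hΔ : 2 ≤ G.maxDegree) (α : ℝ) (hα0 : 0 ≤ α) (hα1 : α ≤ 1) (ρ : ℝ)
    (hρ : IsGreatest {lam : ℝ | ∃ x : V → ℝ, x ≠ 0 ∧
        (α • Matrix.diagonal (fun v => (G.degree v : ℝ)) + (1 - α) • G.adjMatrix ℝ) *ᵥ x
          = lam • x} ρ) :
    ρ ≤ α * G.maxDegree + 2 * (1 - α) * Real.sqrt ((G.maxDegree : ℝ) - 1) := by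
  obtain ⟨h, hlip, hlower⟩ :=
    hconn.exists_levels_of_card_edgeFinset_le (hsize.elim (fun hE => hE.trans_le (Nat.sub_le _ _)) le_of_eq)
  have hΔ' : (2 : ℝ) ≤ G.maxDegree := by exact_mod_cast hΔ
  set t := Real.sqrt ((G.maxDegree : ℝ) - 1)
  have ht : 1 ≤ t := Real.one_le_sqrt.mpr (by linarith)
  have htΔ : t ^ 2 = G.maxDegree - 1 := Real.sq_sqrt (by linarith)
  obtain ⟨x, hx, hρx⟩ := hρ.1
  have := le_of_alphaAdjMatrix_mulVec_eq_smul hα0 hα1 (fun v => zpow_pos (by linarith) _)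
    (fun v => sum_neighborFinset_zpow_le ht htΔ hlip (G.degree_le_maxDegree v) (hlower v)) hx hρx
  linarith
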